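/- arXiv:1212.1542 — 2 statements merged into one kernel-verified Lean document; each statement's English description precedes it below -/
import Mathlib

section
/- Assume: (a) κ is a measurable cardinal; (b) the set of supercompact cardinals below κ is unbounded in κ; (c) U is a normal ultrafilter on κ; (d) {α < κ : α is a measurable cardinal} ∈ U. Then there exists a normal ultrafilter V on κ such that the set B = {α < κ : α is measurable, the supercompact cardinals below α are unbounded in α, and α is not supercompact} belongs to V; moreover, every member of B is a compact cardinal. -/
open Set

namespace Separability

/-- `F` is an ultrafilter on the set `D` (members of `F` are subsets of `D`). -/
structure IsUltrafilterOnSet {σ : Type*} (D : Set σ) (F : Set (Set σ)) : Prop where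
  sets_subset : ∀ X ∈ F, X ⊆ D
  univ_mem : D ∈ F
  empty_not_mem : ∅ ∉ F
  superset_mem : ∀ X ∈ F, ∀ Y, Y ⊆ D → X ⊆ Y → Y ∈ F
  inter_mem : ∀ X ∈ F, ∀ Y ∈ F, X ∩ Y ∈ F
  mem_or_compl_mem : ∀ X, X ⊆ D → (X ∈ F ∨ D \ X ∈ F)

/-- An ultrafilter on (the type of ordinals below) `κ`. -/
def IsUltrafilterOn (κ : Ordinal) (F : Set (Set Ordinal)) : Prop :=
  IsUltrafilterOnSet (Set.Iio κ) F

/-- `F` is a *normal* ultrafilter on `κ`: it is an ultrafilter on `κ`, it contains every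
co-bounded subset of `κ`, and every function that is regressive on some member of `F`
is constant on some member of `F`. -/
def IsNormalUltrafilterOn (κ : Ordinal) (F : Set (Set Ordinal)) : Prop :=
  IsUltrafilterOn κ F ∧
  (∀ α < κ, {β | α ≤ β ∧ β < κ} ∈ F) ∧
  (∀ f : Ordinal → Ordinal, ∀ S ∈ F, (∀ β ∈ S, 0 < β → f β < β) →
    ∃ T ∈ F, ∃ γ, ∀ β ∈ T, f β = γ)

/-- The ordinal `κ` is a cardinal. -/
def IsCard (κ : Ordinal) : Prop := κ.card.ord = κ

/-- `F` (an ultrafilter on the set `D`) is `κ`-complete: it is closed under intersections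
of families of fewer than `κ` sets. -/
def IsComplete {σ : Type*} (κ : Ordinal) (D : Set σ) (F : Set (Set σ)) : Prop :=
  ∀ δ < κ, ∀ g : Set.Iio δ → Set σ, (∀ i, g i ∈ F) → (D ∩ ⋂ i, g i) ∈ F

/-- `F` is nonprincipal: it contains no singleton. -/
def IsNonprincipal {σ : Type*} (F : Set (Set σ)) : Prop := ∀ b : σ, {b} ∉ F

/-- `α` is a measurable cardinal: an uncountable cardinal carrying a nonprincipal
`α`-complete ultrafilter on `α`. -/
def IsMeasurable (α : Ordinal) : Prop :=
  IsCard α ∧ Ordinal.omega0 < α ∧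
    ∃ F, IsUltrafilterOn α F ∧ IsNonprincipal F ∧ IsComplete α (Set.Iio α) F

/-- `P_κ(λ)`: the subsets of `λ` of cardinality less than `κ`. -/
def sP (κ lam : Ordinal.{0}) : Set (Set Ordinal.{0}) :=
  {x | x ⊆ Set.Iio lam ∧ Cardinal.mk x < Cardinal.lift.{1} κ.card}

/-- `F`, an ultrafilter on `P_κ(λ)`, is *fine*:
for every `i < λ` the set `{x ∈ P_κ(λ) : i ∈ x}` belongs to `F`. -/
def IsFine (κ lam : Ordinal) (F : Set (Set (Set Ordinal))) : Prop :=
  ∀ i < lam, {x | x ∈ sP κ lam ∧ i ∈ x} ∈ F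

/-- `κ` is a compact (strongly compact) cardinal: an uncountable cardinal such that for every
cardinal `λ ≥ κ` there is a `κ`-complete fine ultrafilter on `P_κ(λ)`. -/
def IsCompact (κ : Ordinal) : Prop :=
  IsCard κ ∧ Ordinal.omega0 < κ ∧
    ∀ lam, IsCard lam → κ ≤ lam →
      ∃ F, IsUltrafilterOnSet (sP κ lam) F ∧ IsComplete κ (sP κ lam) F ∧ IsFine κ lam F

/-- `F`, an ultrafilter on `P_κ(λ)`, is *normal*: every choice function on a member of `F`
(`f x ∈ x` for all `x` in some member of `F`) is constant on some member of `F`. -/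
def IsNormalFineMeasure (F : Set (Set (Set Ordinal))) : Prop :=
  ∀ f : Set Ordinal → Ordinal, ∀ S ∈ F, (∀ x ∈ S, f x ∈ x) →
    ∃ T ∈ F, ∃ γ, ∀ x ∈ T, f x = γ

/-- `κ` is a supercompact cardinal: for every cardinal `λ ≥ κ` there is a `κ`-complete
fine normal ultrafilter on `P_κ(λ)`. -/
def IsSupercompact (κ : Ordinal) : Prop :=
  IsCard κ ∧
    ∀ lam, IsCard lam → κ ≤ lam →
      ∃ F, IsUltrafilterOnSet (sP κ lam) F ∧ IsComplete κ (sP κ lam) F ∧ IsFine κ lam F ∧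
        IsNormalFineMeasure F

/-- The set of measurable cardinals below `κ`. -/
def measSet (κ : Ordinal) : Set Ordinal := {α | α < κ ∧ IsMeasurable α}

/-- `S_X = {α < κ : α is measurable and X ∩ α ∈ U_α}`. -/
def sX (κ : Ordinal) (U : Ordinal → Set (Set Ordinal)) (X : Set Ordinal) : Set Ordinal :=
  {α | α < κ ∧ IsMeasurable α ∧ X ∩ Set.Iio α ∈ U α}

/-- The sum of `⟨U_α : α measurable below κ⟩` over `V`: `Y` belongs to the sum iff
`S_Y ∈ V`. -/
def sumUF (κ : Ordinal) (U : Ordinal → Set (Set Ordinal)) (V : Set (Set Ordinal)) :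
    Set (Set Ordinal) :=
  {Y | Y ⊆ Set.Iio κ ∧ sX κ U Y ∈ V}

/-!
Induction on `κ`. If `U` already contains the set `B` of measurable, non-supercompact limits of
supercompacts, take `V = U`. Otherwise `U`-almost every `α < κ` is a measurable, supercompact
limit of supercompacts. Such an `α` carries a normal measure concentrating on measurables:
project a normal fine measure `N` on `P_α(2^α)` along `x ↦ x ∩ α`; for `N`-almost all `x` the
sets coded by members of `x` are closed enough that the projected measure, traced on `x ∩ α`,
is an `(x ∩ α)`-complete nonprincipal ultrafilter. The induction hypothesis then yields normal
measures `V_α ∋ B ∩ α`, and their `U`-sum is a normal measure on `κ` containing `B`.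

Every member of `B` is compact by Menas' argument: the sum, over a measure on a measurable
limit `α` of supercompacts, of fine measures of supercompacts below `α` is an `α`-complete fine
measure.
-/

namespace IsUltrafilterOnSet

variable {σ : Type*} {D : Set σ} {F : Set (Set σ)} {X Y Z : Set σ}

theorem nonempty_of_mem (hF : IsUltrafilterOnSet D F) (hX : X ∈ F) : X.Nonempty :=
  nonempty_iff_ne_empty.2 fun h => hF.empty_not_mem (h ▸ hX)

theorem compl_mem (hF : IsUltrafilterOnSet D F) (hX : X ⊆ D) (h : X ∉ F) : D \ X ∈ F :=
  (hF.mem_or_compl_mem X hX).resolve_left h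

theorem mem_of_superset (hF : IsUltrafilterOnSet D F) (hX : X ∈ F) (hXY : X ⊆ Y)
    (hY : Y ⊆ D) : Y ∈ F :=
  hF.superset_mem X hX Y hY hXY

theorem mem_of_inter_subset (hF : IsUltrafilterOnSet D F) (hX : X ∈ F) (hY : Y ∈ F)
    (hXYZ : X ∩ Y ⊆ Z) (hZ : Z ⊆ D) : Z ∈ F :=
  hF.mem_of_superset (hF.inter_mem X hX Y hY) hXYZ hZ

theorem inter_nonempty (hF : IsUltrafilterOnSet D F) (hX : X ∈ F) (hY : Y ∈ F) :
    (X ∩ Y).Nonempty :=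
  hF.nonempty_of_mem (hF.inter_mem X hX Y hY)

theorem setOf_imp_mem (hF : IsUltrafilterOnSet D F) {p : Prop} {q : σ → Prop}
    (h : p → {x | x ∈ D ∧ q x} ∈ F) : {x | x ∈ D ∧ (p → q x)} ∈ F := by
  by_cases hp : p
  · exact hF.mem_of_superset (h hp) (fun _ hx => ⟨hx.1, fun _ => hx.2⟩) fun _ hx => hx.1
  · exact hF.mem_of_superset hF.univ_mem (fun _ hx => ⟨hx, fun h => absurd h hp⟩)
      fun _ hx => hx.1

theorem diff_range_mem {κ δ : Ordinal} (hF : IsUltrafilterOnSet D F) (hc : IsComplete κ D F)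
    (hnp : IsNonprincipal F) (hδ : δ < κ) (e : Iio δ → σ) (he : range e ⊆ D) :
    D \ range e ∈ F := by
  have hmem : ∀ i, D \ {e i} ∈ F := fun i =>
    hF.compl_mem (singleton_subset_iff.2 (he (mem_range_self i))) (hnp (e i))
  convert hc δ hδ _ hmem using 1
  ext x
  simp only [mem_sdiff, mem_range, mem_inter_iff, mem_iInter, mem_singleton_iff, not_exists]
  exact ⟨fun ⟨hx, hne⟩ => ⟨hx, fun i => ⟨hx, fun h => hne i h.symm⟩⟩,
    fun ⟨hx, h⟩ => ⟨hx, fun i hi => (h i).2 hi.symm⟩⟩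

end IsUltrafilterOnSet

namespace IsUltrafilterOn

variable {α : Ordinal} {F : Set (Set Ordinal)}

theorem gt_mem (hF : IsUltrafilterOn α F) (hc : IsComplete α (Iio α) F)
    (hnp : IsNonprincipal F) {γ : Ordinal} (hγ : γ < α) : {β | γ < β ∧ β < α} ∈ F := by
  have hle : Iio α \ range (Subtype.val : Iio γ → Ordinal) ∈ F :=
    hF.diff_range_mem hc hnp hγ Subtype.val fun _ ⟨β, hβ⟩ => hβ ▸ β.2.trans hγ
  refine hF.mem_of_inter_subset hle (hF.compl_mem (singleton_subset_iff.2 hγ) (hnp γ))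
    (fun β ⟨⟨hβα, hβγ⟩, _, hne⟩ => ⟨lt_of_le_of_ne ?_ (Ne.symm hne), hβα⟩)
    fun _ hβ => hβ.2
  exact not_lt.1 fun hlt => hβγ ⟨⟨β, hlt⟩, rfl⟩

theorem isCard (hF : IsUltrafilterOn α F) (hc : IsComplete α (Iio α) F)
    (hnp : IsNonprincipal F) : IsCard α := by
  refine (Cardinal.ord_card_le α).antisymm (not_lt.1 fun hlt => ?_)
  have hmk : Cardinal.mk (Iio α.card.ord) = Cardinal.mk (Iio α) := by
    simp only [Cardinal.mk_Iio_ordinal, Cardinal.card_ord]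
  obtain ⟨e⟩ := Cardinal.eq.1 hmk
  have he : range (Subtype.val ∘ e) = Iio α := by
    rw [range_comp, e.range_eq_univ, image_univ, Subtype.range_coe]
  have := hF.diff_range_mem hc hnp hlt _ he.le
  rw [he, sdiff_self] at this
  exact hF.empty_not_mem this

end IsUltrafilterOn

theorem IsComplete.inter_mem {σ : Type*} {κ : Ordinal} {D : Set σ} {F : Set (Set σ)}
    (hc : IsComplete κ D F) (h2 : 2 < κ) {X Y : Set σ} (hX : X ∈ F) (hY : Y ∈ F) :
    D ∩ (X ∩ Y) ∈ F := by
  convert hc 2 h2 (fun j => if (j : Ordinal) = 0 then X else Y) fun j => by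
    split_ifs
    exacts [hX, hY] using 2
  ext z
  simp only [mem_inter_iff, mem_iInter]
  refine ⟨fun h j => ?_, fun h => ⟨?_, ?_⟩⟩
  · split_ifs
    exacts [h.1, h.2]
  · simpa using h ⟨0, by simp⟩
  · simpa using h ⟨1, mem_Iio.2 one_lt_two⟩

theorem IsMeasurable.isSuccLimit {κ : Ordinal} (h : IsMeasurable κ) : Order.IsSuccLimit κ := by
  rw [← h.1]
  exact Cardinal.isSuccLimit_ord (by simpa using Ordinal.card_le_card h.2.1.le)

theorem sInf_lt_of_subset_Iio {s : Set Ordinal} {α : Ordinal} (hs : s ⊆ Iio α) (hα : 0 < α) :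
    sInf s < α := by
  rcases s.eq_empty_or_nonempty with rfl | hne
  · simpa using hα
  · exact hs (csInf_mem hne)

section Pushforward

variable {σ τ : Type*} {D : Set σ} {E : Set τ} {F : Set (Set σ)} {f : σ → τ}

def pushforward (D : Set σ) (f : σ → τ) (E : Set τ) (F : Set (Set σ)) : Set (Set τ) :=
  {Y | Y ⊆ E ∧ {x | x ∈ D ∧ f x ∈ Y} ∈ F}

theorem IsUltrafilterOnSet.pushforward (hF : IsUltrafilterOnSet D F) (hf : MapsTo f D E) :
    IsUltrafilterOnSet E (pushforward D f E F) where
  sets_subset _ hY := hY.1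
  univ_mem := ⟨subset_rfl, hF.mem_of_superset hF.univ_mem (fun _ hx => ⟨hx, hf hx⟩)
    fun _ hx => hx.1⟩
  empty_not_mem h := hF.empty_not_mem (by simpa using h.2)
  superset_mem _ hX _ hY hXY := ⟨hY, hF.mem_of_superset hX.2 (fun _ hx => ⟨hx.1, hXY hx.2⟩)
    fun _ hx => hx.1⟩
  inter_mem _ hX _ hY := ⟨inter_subset_left.trans hX.1, hF.mem_of_superset
    (hF.inter_mem _ hX.2 _ hY.2) (fun _ hx => ⟨hx.1.1, hx.1.2, hx.2.2⟩) fun _ hx => hx.1⟩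
  mem_or_compl_mem X hX := by
    refine (hF.mem_or_compl_mem {x | x ∈ D ∧ f x ∈ X} fun _ hx => hx.1).imp
      (fun h => ⟨hX, h⟩) fun h => ⟨sdiff_subset, hF.mem_of_superset h ?_ fun _ hx => hx.1⟩
    exact fun _ hx => ⟨hx.1, hf hx.1, fun hfx => hx.2 ⟨hx.1, hfx⟩⟩

theorem IsComplete.pushforward {κ : Ordinal} (hF : IsUltrafilterOnSet D F)
    (hc : IsComplete κ D F) (hf : MapsTo f D E) :
    IsComplete κ E (pushforward D f E F) := by
  intro δ hδ g hg
  refine ⟨inter_subset_left,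
    hF.mem_of_superset (hc δ hδ _ fun i => (hg i).2) ?_ fun _ hx => hx.1⟩
  intro x hx
  simp only [mem_inter_iff, mem_iInter, mem_ofPred_eq] at hx ⊢
  exact ⟨hx.1, hf hx.1, fun i => (hx.2 i).2⟩

end Pushforward

section Sum

variable {ι σ : Type*} {I A : Set ι} {u : Set (Set ι)} {E : Set σ} {D : ι → Set σ}
  {G : ι → Set (Set σ)}

def sumFilter (I : Set ι) (u : Set (Set ι)) (E : Set σ) (D : ι → Set σ)
    (G : ι → Set (Set σ)) : Set (Set σ) :=
  {X | X ⊆ E ∧ {i | i ∈ I ∧ X ∩ D i ∈ G i} ∈ u}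

theorem mem_sumFilter_of (hu : IsUltrafilterOnSet I u) (hA : A ∈ u) {B : Set ι} (hB : B ∈ u)
    {X : Set σ} (hXE : X ⊆ E) (hX : ∀ i ∈ A, i ∈ B → X ∩ D i ∈ G i) :
    X ∈ sumFilter I u E D G :=
  ⟨hXE, hu.mem_of_inter_subset hA hB (fun i hi => ⟨hu.sets_subset A hA hi.1, hX i hi.1 hi.2⟩)
    fun _ hi => hi.1⟩

variable (hu : IsUltrafilterOnSet I u) (hA : A ∈ u)
  (hG : ∀ i ∈ A, IsUltrafilterOnSet (D i) (G i)) (hD : ∀ i ∈ A, D i ⊆ E)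
include hu hA hG hD

theorem IsUltrafilterOnSet.sumFilter : IsUltrafilterOnSet E (sumFilter I u E D G) where
  sets_subset _ hX := hX.1
  univ_mem := mem_sumFilter_of hu hA hA subset_rfl fun i hi _ => by
    rw [inter_eq_right.2 (hD i hi)]
    exact (hG i hi).univ_mem
  empty_not_mem h := by
    obtain ⟨i, hi, -, hi'⟩ := hu.inter_nonempty hA h.2
    exact (hG i hi).empty_not_mem (by simpa using hi')
  superset_mem X hX Y hYE hXY := mem_sumFilter_of hu hA hX.2 hYE fun i hi hiX =>
    (hG i hi).mem_of_superset hiX.2 (inter_subset_inter_left _ hXY) inter_subset_right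
  inter_mem X hX Y hY := mem_sumFilter_of hu hA (hu.inter_mem _ hX.2 _ hY.2)
    (inter_subset_left.trans hX.1) fun i hi hiXY => by
      convert (hG i hi).inter_mem _ hiXY.1.2 _ hiXY.2.2 using 1
      rw [inter_inter_distrib_right]
  mem_or_compl_mem X hXE := by
    by_cases h : {i | i ∈ I ∧ X ∩ D i ∈ G i} ∈ u
    · exact Or.inl ⟨hXE, h⟩
    refine Or.inr (mem_sumFilter_of hu hA (hu.compl_mem (fun _ hi => hi.1) h) sdiff_subset
      fun i hi hiX => ?_)
    refine (hG i hi).mem_of_superset ((hG i hi).compl_mem inter_subset_right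
      fun hXi => hiX.2 ⟨hiX.1, hXi⟩) ?_ inter_subset_right
    exact fun x hx => ⟨⟨hD i hi hx.1, fun hxX => hx.2 ⟨hxX, hx.1⟩⟩, hx.1⟩

theorem IsComplete.sumFilter {κ : Ordinal} (hc : IsComplete κ I u) (c : ι → Ordinal)
    (hGc : ∀ i ∈ A, IsComplete (c i) (D i) (G i))
    (hcu : ∀ δ < κ, {i | i ∈ I ∧ δ < c i} ∈ u) :
    IsComplete κ E (sumFilter I u E D G) := by
  intro δ hδ g hg
  refine mem_sumFilter_of hu hA (hu.inter_mem _ (hc δ hδ _ fun j => (hg j).2) _ (hcu δ hδ))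
    inter_subset_left fun i hi ⟨hiI, hic⟩ => ?_
  simp only [mem_inter_iff, mem_iInter, mem_ofPred_eq] at hiI
  refine (hG i hi).mem_of_superset (hGc i hi δ hic.2 _ fun j => (hiI.2 j).2) ?_
    inter_subset_right
  intro x hx
  simp only [mem_inter_iff, mem_iInter] at hx ⊢
  exact ⟨⟨hD i hi hx.1, fun j => (hx.2 j).1⟩, hx.1⟩

end Sum

namespace IsNormalUltrafilterOn

variable {κ : Ordinal} {U : Set (Set Ordinal)}

theorem gt_mem (hU : IsNormalUltrafilterOn κ U) (hκ : Order.IsSuccLimit κ) {γ : Ordinal}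
    (hγ : γ < κ) : {β | γ < β ∧ β < κ} ∈ U :=
  hU.1.mem_of_superset (hU.2.1 _ (hκ.succ_lt hγ))
    (fun _ hβ => ⟨Order.succ_le_iff.1 hβ.1, hβ.2⟩) fun _ hβ => hβ.2

theorem exists_lt_setOf_eq_mem (hU : IsNormalUltrafilterOn κ U) (h1 : 1 < κ)
    {S : Set Ordinal} (hS : S ∈ U) {f : Ordinal → Ordinal}
    (hf : ∀ β ∈ S, 0 < β → f β < β) : ∃ γ < κ, {β | β ∈ S ∧ f β = γ} ∈ U := by
  have hS' : S ∩ {β | 1 ≤ β ∧ β < κ} ∈ U := hU.1.inter_mem _ hS _ (hU.2.1 1 h1)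
  obtain ⟨T, hT, γ, hγ⟩ := hU.2.2 f _ hS' fun β hβ => hf β hβ.1
  obtain ⟨β, hβT, hβS, hβ1, hβκ⟩ := hU.1.inter_nonempty hT hS'
  refine ⟨γ, ?_, hU.1.mem_of_inter_subset hT hS' (fun β hβ => ⟨hβ.2.1, hγ β hβ.1⟩)
    fun _ hβ => hU.1.sets_subset S hS hβ.1⟩
  rw [← hγ β hβT]
  exact (hf β hβS (Order.one_le_iff_pos.1 hβ1)).trans hβκ

theorem sumFilter (hU : IsNormalUltrafilterOn κ U) (hκ : Order.IsSuccLimit κ)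
    {A : Set Ordinal} (hA : A ∈ U) {G : Ordinal → Set (Set Ordinal)}
    (hG : ∀ i ∈ A, IsNormalUltrafilterOn i (G i)) :
    IsNormalUltrafilterOn κ (sumFilter (Iio κ) U (Iio κ) Iio G) := by
  have hAκ : A ⊆ Iio κ := hU.1.sets_subset A hA
  have h1κ : 1 < κ := Ordinal.one_lt_of_isSuccLimit hκ
  refine ⟨hU.1.sumFilter hA (fun i hi => (hG i hi).1) fun i hi => Iio_subset_Iio (hAκ hi).le,
    fun γ hγ => ?_, fun f Y hY hf => ?_⟩
  · refine mem_sumFilter_of hU.1 hA (hU.gt_mem hκ hγ) (fun _ hβ => hβ.2) fun i hi hγi => ?_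
    convert (hG i hi).2.1 γ hγi.1 using 1
    ext β
    exact ⟨fun h => ⟨h.1.1, h.2⟩, fun h => ⟨⟨h.1, h.2.trans (hAκ hi)⟩, h.2⟩⟩
  -- press `f` down inside each `G i`, then press the resulting values down in `U`
  have hpress : ∀ i ∈ {i | i ∈ Iio κ ∧ Y ∩ Iio i ∈ G i} ∩ (A ∩ {i | 1 < i ∧ i < κ}),
      ∃ γ < i, {β | β ∈ Y ∩ Iio i ∧ f β = γ} ∈ G i := fun i hi =>
    (hG i hi.2.1).exists_lt_setOf_eq_mem hi.2.2.1 hi.1.2 fun β hβ => hf β hβ.1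
  choose! g hgi hg using hpress
  obtain ⟨γ, -, hγ⟩ := hU.exists_lt_setOf_eq_mem h1κ
    (hU.1.inter_mem _ hY.2 _ (hU.1.inter_mem _ hA _ (hU.gt_mem hκ h1κ))) fun i hi _ => hgi i hi
  refine ⟨{β | β ∈ Y ∧ f β = γ}, mem_sumFilter_of hU.1 hA hγ (fun β hβ => hY.1 hβ.1)
    fun i _ hi => ?_, γ, fun β hβ => hβ.2⟩
  have hGi := hg i hi.1
  rw [hi.2] at hGi
  exact (hG i hi.1.2.1).1.mem_of_superset hGi (fun β hβ => ⟨⟨hβ.1.1, hβ.2⟩, hβ.1.2⟩)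
    inter_subset_right

theorem setOf_limit_mem (hU : IsNormalUltrafilterOn κ U) (hκ : Order.IsSuccLimit κ)
    {P : Ordinal → Prop} (hP : ∀ β < κ, ∃ γ, β < γ ∧ γ < κ ∧ P γ) :
    {α | α < κ ∧ ∀ β < α, ∃ γ, β < γ ∧ γ < α ∧ P γ} ∈ U := by
  by_contra hL
  have hbound : ∀ α ∈ Iio κ \ {α | α < κ ∧ ∀ β < α, ∃ γ, β < γ ∧ γ < α ∧ P γ},
      ∃ β < α, ∀ γ, β < γ → γ < α → ¬P γ := by
    rintro α ⟨hακ, hα⟩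
    by_contra h
    push Not at h
    exact hα ⟨hακ, h⟩
  choose! bound hbα hbound using hbound
  obtain ⟨β₀, hβ₀, hT⟩ := hU.exists_lt_setOf_eq_mem (Ordinal.one_lt_of_isSuccLimit hκ)
    (hU.1.compl_mem (fun _ hα => hα.1) hL) fun α hα _ => hbα α hα
  obtain ⟨γ, hβ₀γ, hγκ, hγ⟩ := hP β₀ hβ₀
  obtain ⟨α, ⟨hαS, hαβ₀⟩, hγα, -⟩ := hU.1.inter_nonempty hT (hU.gt_mem hκ hγκ)
  exact hbound α hαS γ (hαβ₀ ▸ hβ₀γ) hγα hγ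

end IsNormalUltrafilterOn


def IsSupercompactLimit (α : Ordinal.{0}) : Prop :=
  ∀ β < α, ∃ γ, β < γ ∧ γ < α ∧ IsSupercompact γ

theorem sP_mono {δ α lam : Ordinal} (h : δ ≤ α) : sP δ lam ⊆ sP α lam :=
  fun _ hx => ⟨hx.1, hx.2.trans_le (Cardinal.lift_le.2 (Ordinal.card_le_card h))⟩

theorem IsMeasurable.isCompact_of_isSupercompactLimit {α : Ordinal.{0}} (hα : IsMeasurable α)
    (hlim : IsSupercompactLimit α) : IsCompact α := by
  obtain ⟨hcard, hω, u, hu, hnp, hc⟩ := hα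
  refine ⟨hcard, hω, fun lam hlam hαlam => ?_⟩
  have hchoice : ∀ β ∈ Iio α, ∃ δ G, β < δ ∧ δ < α ∧ IsUltrafilterOnSet (sP δ lam) G ∧
      IsComplete δ (sP δ lam) G ∧ IsFine δ lam G := by
    intro β hβ
    obtain ⟨δ, hβδ, hδα, hδ⟩ := hlim β hβ
    obtain ⟨G, hG, hGc, hGf, -⟩ := hδ.2 lam hlam (hδα.le.trans hαlam)
    exact ⟨δ, G, hβδ, hδα, hG, hGc, hGf⟩
  choose! δ G hβδ hδα hG hGc hGf using hchoice
  have hsub : ∀ β ∈ Iio α, sP (δ β) lam ⊆ sP α lam := fun β hβ => sP_mono (hδα β hβ).le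
  refine ⟨_, hu.sumFilter hu.univ_mem hG hsub,
    IsComplete.sumFilter hu hu.univ_mem hG hsub hc δ hGc fun δ' hδ' => ?_, fun i hi => ?_⟩
  · exact hu.mem_of_superset (hu.gt_mem hc hnp hδ')
      (fun β hβ => ⟨hβ.2, hβ.1.trans (hβδ β hβ.2)⟩) fun _ hβ => hβ.1
  · refine mem_sumFilter_of hu hu.univ_mem hu.univ_mem (fun x hx => hx.1) fun β hβ _ => ?_
    exact (hG β hβ).mem_of_superset (hGf β hβ i hi)
      (fun x hx => ⟨⟨hsub β hβ hx.1, hx.2⟩, hx.1⟩) inter_subset_right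

structure IsSupercompactMeasure (α lam : Ordinal.{0}) (N : Set (Set (Set Ordinal.{0}))) :
    Prop where
  ultra : IsUltrafilterOnSet (sP α lam) N
  complete : IsComplete α (sP α lam) N
  fine : IsFine α lam N
  normal : IsNormalFineMeasure N

def sPInitial (α lam : Ordinal.{0}) : Set (Set Ordinal.{0}) :=
  {x | x ∈ sP α lam ∧ ∀ β ∈ x, β < α → Iio β ⊆ x}

/-- On `sPInitial α lam` this is the ordinal `x ∩ α`. -/
noncomputable def gap (α : Ordinal) (x : Set Ordinal) : Ordinal := sInf (Iio α \ x)

theorem gap_mem {α lam : Ordinal.{0}} {x : Set Ordinal} (hx : x ∈ sP α lam) :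
    gap α x ∈ Iio α \ x := by
  refine csInf_mem (not_subset.1 fun hαx => (Cardinal.mk_le_mk_of_subset hαx).not_gt ?_)
  simpa [Cardinal.mk_Iio_ordinal] using hx.2

theorem lt_gap_iff {α lam : Ordinal.{0}} {x : Set Ordinal} (hx : x ∈ sPInitial α lam)
    {β : Ordinal} : β < gap α x ↔ β ∈ x ∧ β < α := by
  have hgap := gap_mem hx.1
  refine ⟨fun hβ => ⟨not_not.1 fun hβx => hβ.not_ge (csInf_le' ⟨hβ.trans hgap.1, hβx⟩),
    hβ.trans hgap.1⟩, fun ⟨hβx, hβα⟩ => not_le.1 fun hle => hgap.2 ?_⟩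
  rcases hle.lt_or_eq with hlt | heq
  · exact hx.2 β hβx hβα hlt
  · exact heq ▸ hβx

def gapFilter (α lam : Ordinal.{0}) (N : Set (Set (Set Ordinal.{0}))) : Set (Set Ordinal) :=
  pushforward (sP α lam) (gap α) (Iio α) N

namespace IsSupercompactMeasure

variable {α lam : Ordinal.{0}} {N : Set (Set (Set Ordinal.{0}))}
  (hN : IsSupercompactMeasure α lam N)
include hN

theorem diagInter_mem (X : Ordinal → Set (Set Ordinal)) (hX : ∀ i, X i ∈ N) :
    {x | x ∈ sP α lam ∧ ∀ i ∈ x, x ∈ X i} ∈ N := by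
  by_contra h
  have hS := hN.ultra.compl_mem (fun _ hx => hx.1) h
  have hwit : ∀ x ∈ sP α lam \ {x | x ∈ sP α lam ∧ ∀ i ∈ x, x ∈ X i}, ∃ i ∈ x, x ∉ X i := by
    rintro x ⟨hx, hxX⟩
    by_contra h'
    push Not at h'
    exact hxX ⟨hx, h'⟩
  choose! f hfx hfX using hwit
  obtain ⟨T, hT, i, hi⟩ := hN.normal f _ hS hfx
  obtain ⟨x, ⟨hxT, hxS⟩, hxX⟩ := hN.ultra.nonempty_of_mem
    (hN.ultra.inter_mem _ (hN.ultra.inter_mem _ hT _ hS) _ (hX i))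
  exact hfX x hxS (hi x hxT ▸ hxX)

theorem closedUnder_mem (f : Ordinal → Ordinal) (hf : ∀ i, f i < lam) :
    {x | x ∈ sP α lam ∧ ∀ i ∈ x, f i ∈ x} ∈ N :=
  hN.ultra.mem_of_superset (hN.diagInter_mem _ fun i => hN.fine (f i) (hf i))
    (fun _ hx => ⟨hx.1, fun i hi => (hx.2 i hi).2⟩) fun _ hx => hx.1

theorem closedUnder₂_mem (f : Ordinal → Ordinal → Ordinal) (hf : ∀ i j, f i j < lam) :
    {x | x ∈ sP α lam ∧ ∀ i ∈ x, ∀ j ∈ x, f i j ∈ x} ∈ N :=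
  hN.ultra.mem_of_superset (hN.diagInter_mem _ fun i => hN.closedUnder_mem (f i) (hf i))
    (fun _ hx => ⟨hx.1, fun i hi => (hx.2 i hi).2⟩) fun _ hx => hx.1

/-- The `δ` coordinates of a counterexample can each be pressed down, and `α`-completeness
presses all of them down on a single measure-one set. -/
theorem closedUnderFamily_mem {δ : Ordinal} (hδ : δ < α)
    (op : (Iio δ → Ordinal) → Ordinal) (hop : ∀ c, op c < lam) :
    {x | x ∈ sP α lam ∧ ∀ c : Iio δ → Ordinal, (∀ j, c j ∈ x) → op c ∈ x} ∈ N := by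
  by_contra h
  set S := sP α lam \ {x | x ∈ sP α lam ∧ ∀ c : Iio δ → Ordinal, (∀ j, c j ∈ x) → op c ∈ x}
  have hS : S ∈ N := hN.ultra.compl_mem (fun _ hx => hx.1) h
  have hwit : ∀ x ∈ S, ∃ c : Iio δ → Ordinal, (∀ j, c j ∈ x) ∧ op c ∉ x := by
    rintro x ⟨hx, hxc⟩
    by_contra h'
    push Not at h'
    exact hxc ⟨hx, h'⟩
  choose! c hcx hc using hwit
  choose T hT γ hγ using fun j => hN.normal (c · j) S hS fun x hx => hcx x hx j
  obtain ⟨x, ⟨⟨-, hxT⟩, hxS⟩, -, hxγ⟩ := hN.ultra.nonempty_of_mem (hN.ultra.inter_mem _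
    (hN.ultra.inter_mem _ (hN.complete δ hδ T hT) _ hS) _ (hN.fine (op γ) (hop γ)))
  have hcγ : c x = γ := funext fun j => hγ j x (mem_iInter.1 hxT j)
  exact hc x hxS (hcγ ▸ hxγ)

theorem setOf_Iio_subset_mem {δ : Ordinal} (hδα : δ < α) (hδlam : δ ≤ lam) :
    {x | x ∈ sP α lam ∧ Iio δ ⊆ x} ∈ N :=
  hN.ultra.mem_of_superset (hN.complete δ hδα _ fun j => hN.fine j (j.2.trans_le hδlam))
    (fun _ hx => ⟨hx.1, fun j hj => (mem_iInter.1 hx.2 ⟨j, hj⟩).2⟩) fun _ hx => hx.1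

theorem sPInitial_mem (hαlam : α ≤ lam) : sPInitial α lam ∈ N :=
  hN.ultra.mem_of_superset (hN.diagInter_mem _ fun _ => hN.ultra.setOf_imp_mem fun hβ =>
      hN.setOf_Iio_subset_mem hβ (hβ.le.trans hαlam))
    (fun _ hx => ⟨hx.1, fun β hβ hβα => (hx.2 β hβ).2 hβα⟩) fun _ hx => hx.1

theorem lt_gap_mem (hαlam : α ≤ lam) {γ : Ordinal} (hγ : γ < α) :
    {x | x ∈ sPInitial α lam ∧ γ < gap α x} ∈ N :=
  hN.ultra.mem_of_inter_subset (hN.sPInitial_mem hαlam) (hN.fine γ (hγ.trans_le hαlam))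
    (fun _ hx => ⟨hx.1, (lt_gap_iff hx.1).2 ⟨hx.2.2, hγ⟩⟩) fun _ hx => hx.1.1

theorem closedUnderFamily_gap_mem (hαlam : α ≤ lam)
    (op : (δ : Ordinal) → (Iio δ → Ordinal) → Ordinal) (hop : ∀ δ c, op δ c < lam) :
    {x | x ∈ sPInitial α lam ∧ ∀ δ < gap α x, ∀ c : Iio δ → Ordinal, (∀ j, c j ∈ x) →
      op δ c ∈ x} ∈ N := by
  refine hN.ultra.mem_of_inter_subset (hN.sPInitial_mem hαlam) (hN.diagInter_mem _ fun δ =>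
      hN.ultra.setOf_imp_mem fun hδ => hN.closedUnderFamily_mem hδ (op δ) (hop δ))
    (fun x hx => ⟨hx.1, fun δ hδ => ?_⟩) fun _ hx => hx.1.1
  obtain ⟨hδx, hδα⟩ := (lt_gap_iff hx.1).1 hδ
  exact (hx.2.2 δ hδx).2 hδα

theorem gapFilter_ultra : IsUltrafilterOn α (gapFilter α lam N) :=
  hN.ultra.pushforward fun _ hx => (gap_mem hx).1

theorem gapFilter_complete : IsComplete α (Iio α) (gapFilter α lam N) :=
  hN.complete.pushforward hN.ultra fun _ hx => (gap_mem hx).1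

theorem gapFilter_nonprincipal (hαlam : α ≤ lam) : IsNonprincipal (gapFilter α lam N) := by
  intro b hb
  obtain ⟨x, hxb, -, hbx⟩ := hN.ultra.inter_nonempty hb.2 (hN.lt_gap_mem hαlam (hb.1 rfl))
  exact hbx.ne hxb.2.symm

theorem gapFilter_normal (hαlam : α ≤ lam) : IsNormalUltrafilterOn α (gapFilter α lam N) := by
  refine ⟨hN.gapFilter_ultra, fun γ hγ => ⟨fun _ hβ => hβ.2, ?_⟩, fun f Y hY hf => ?_⟩
  · exact hN.ultra.mem_of_superset (hN.lt_gap_mem hαlam hγ)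
      (fun _ hx => ⟨hx.1.1, hx.2.le, (gap_mem hx.1.1).1⟩) fun _ hx => hx.1
  obtain ⟨β, hβ⟩ := hN.gapFilter_ultra.nonempty_of_mem hY
  have hS : {x | x ∈ sP α lam ∧ gap α x ∈ Y} ∩ {x | x ∈ sPInitial α lam ∧ 0 < gap α x} ∈ N :=
    hN.ultra.inter_mem _ hY.2 _ (hN.lt_gap_mem hαlam (pos_of_gt (hY.1 hβ)))
  obtain ⟨T, hT, γ, hγ⟩ := hN.normal (f ∘ gap α) _ hS fun x hx =>
    ((lt_gap_iff hx.2.1).1 (hf _ hx.1.2 hx.2.2)).1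
  refine ⟨{β | β ∈ Y ∧ f β = γ}, ⟨fun _ hβ => hY.1 hβ.1, ?_⟩, γ, fun _ hβ => hβ.2⟩
  exact hN.ultra.mem_of_inter_subset hT hS (fun x hx => ⟨hx.2.1.1, hx.2.1.2, hγ x hx.1⟩)
    fun _ hx => hx.1

end IsSupercompactMeasure


section Coding

open Cardinal

noncomputable def codeBound (α : Ordinal.{0}) : Ordinal.{0} := ((2 : Cardinal) ^ α.card).ord

theorem lt_codeBound (α : Ordinal.{0}) : α < codeBound α :=
  lt_ord.2 (cantor _)

theorem isCard_codeBound (α : Ordinal.{0}) : IsCard (codeBound α) := by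
  rw [IsCard, codeBound, card_ord]

theorem mk_Iio_codeBound (α : Ordinal.{0}) : #(Iio (codeBound α)) = #(Set (Iio α)) := by
  rw [mk_Iio_ordinal, mk_set, mk_Iio_ordinal, codeBound, card_ord, lift_power]
  norm_num

noncomputable def codeEquiv (α : Ordinal.{0}) : Iio (codeBound α) ≃ Set (Iio α) :=
  Classical.choice (Cardinal.eq.1 (mk_Iio_codeBound α))

noncomputable def decode (α i : Ordinal.{0}) : Set Ordinal.{0} :=
  if h : i < codeBound α then Subtype.val '' codeEquiv α ⟨i, h⟩ else ∅

noncomputable def code (α : Ordinal.{0}) (Z : Set Ordinal.{0}) : Ordinal.{0} :=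
  ((codeEquiv α).symm {y | y.1 ∈ Z}).1

theorem decode_subset (α i : Ordinal.{0}) : decode α i ⊆ Iio α := by
  unfold decode
  split_ifs
  · exact fun _ ⟨y, _, hy⟩ => hy ▸ y.2
  · exact empty_subset _

theorem code_lt (α : Ordinal.{0}) (Z : Set Ordinal.{0}) : code α Z < codeBound α :=
  ((codeEquiv α).symm _).2

theorem decode_code {α : Ordinal.{0}} {Z : Set Ordinal.{0}} (hZ : Z ⊆ Iio α) :
    decode α (code α Z) = Z := by
  rw [decode, dif_pos (code_lt α Z)]
  simp only [code, Subtype.coe_eta, Equiv.apply_symm_apply]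
  ext β
  exact ⟨fun ⟨y, hy, hyβ⟩ => hyβ ▸ hy, fun hβ => ⟨⟨β, hZ hβ⟩, hβ, rfl⟩⟩

end Coding

section Trace

variable {α π : Ordinal} {u M : Set (Set Ordinal)}

def traceFilter (π : Ordinal) (u M : Set (Set Ordinal)) : Set (Set Ordinal) :=
  {Z | Z ⊆ Iio π ∧ ∃ Y ∈ M, Y ∈ u ∧ Y ∩ Iio π = Z}

theorem traceFilter_nonprincipal
    (hunbdd : ∀ Y ∈ M, Y ∈ u → ∀ b < π, ∃ β ∈ Y, b < β ∧ β < π) :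
    IsNonprincipal (traceFilter π u M) := by
  rintro b ⟨-, Y, hYM, hYu, hY⟩
  have hb : b ∈ Y ∩ Iio π := hY ▸ rfl
  obtain ⟨β, hβY, hbβ, hβπ⟩ := hunbdd Y hYM hYu b hb.2
  exact hbβ.ne (hY ▸ ⟨hβY, hβπ⟩ : β ∈ ({b} : Set Ordinal)).symm

variable (hπα : π < α)
  (hinter : ∀ δ < π, ∀ g : Iio δ → Set Ordinal, (∀ j, g j ∈ M) → Iio α ∩ ⋂ j, g j ∈ M)
include hπα hinter

theorem traceFilter_complete (hc : IsComplete α (Iio α) u) :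
    IsComplete π (Iio π) (traceFilter π u M) := by
  intro δ hδ g hg
  choose Y hYM hYu hYg using fun j => (hg j).2
  refine ⟨inter_subset_left, _, hinter δ hδ Y hYM, hc δ (hδ.trans hπα) Y hYu, ?_⟩
  ext β
  simp only [mem_inter_iff, mem_iInter, mem_Iio, ← hYg]
  exact ⟨fun h => ⟨h.2, fun j => ⟨h.1.2 j, h.2⟩⟩,
    fun h => ⟨⟨h.1.trans hπα, fun j => (h.2 j).1⟩, h.1⟩⟩

theorem traceFilter_ultra (hπ : 2 < π) (hu : IsUltrafilterOn α u)
    (hc : IsComplete α (Iio α) u) (hM : ∀ Y ∈ M, Y ⊆ Iio α)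
    (htrace : ∀ Z ⊆ Iio π, ∃ Y ∈ M, Y ∩ Iio π = Z) (hcompl : ∀ Y ∈ M, Iio α \ Y ∈ M)
    (hunbdd : ∀ Y ∈ M, Y ∈ u → ∀ b < π, ∃ β ∈ Y, b < β ∧ β < π) :
    IsUltrafilterOn π (traceFilter π u M) := by
  have hempty : ∅ ∉ traceFilter π u M := fun ⟨_, Y, hYM, hYu, hY⟩ => by
    obtain ⟨β, hβY, -, hβπ⟩ := hunbdd Y hYM hYu 0 (pos_of_gt hπ)
    exact (hY ▸ ⟨hβY, hβπ⟩ : β ∈ (∅ : Set Ordinal))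
  have hinter₂ : ∀ X ∈ traceFilter π u M, ∀ Y ∈ traceFilter π u M,
      X ∩ Y ∈ traceFilter π u M := fun X hX Y hY => by
    simpa [inter_eq_right.2 (inter_subset_left.trans hX.1)] using
      (traceFilter_complete hπα hinter hc).inter_mem hπ hX hY
  have hmoc : ∀ X ⊆ Iio π, X ∈ traceFilter π u M ∨ Iio π \ X ∈ traceFilter π u M := by
    intro X hX
    obtain ⟨Y, hYM, hYX⟩ := htrace X hX
    by_cases hYu : Y ∈ u
    · exact Or.inl ⟨hX, Y, hYM, hYu, hYX⟩
    refine Or.inr ⟨sdiff_subset, _, hcompl Y hYM, hu.compl_mem (hM Y hYM) hYu, ?_⟩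
    ext β
    simp only [← hYX, mem_inter_iff, mem_sdiff, mem_Iio]
    exact ⟨fun h => ⟨h.2, fun hβ => h.1.2 hβ.1⟩,
      fun h => ⟨⟨h.1.trans hπα, fun hβ => h.2 ⟨hβ, h.1⟩⟩, h.1⟩⟩
  refine ⟨fun _ hX => hX.1, ⟨subset_rfl, Iio α, ?_, hu.univ_mem, ?_⟩, hempty,
    fun X hX Y hY hXY => (hmoc Y hY).resolve_right fun hY' => hempty ?_, hinter₂, hmoc⟩
  · simpa using hinter 0 (pos_of_gt hπ) isEmptyElim isEmptyElim
  · exact inter_eq_right.2 (Iio_subset_Iio hπα.le)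
  · convert hinter₂ X hX _ hY' using 1
    exact (eq_empty_of_subset_empty fun β hβ => hβ.2.2 (hXY hβ.1)).symm

end Trace

/-- The measure on `π = x ∩ α` is `traceFilter`: the sets of `u` coded in `x`, cut down
to `π`. -/
theorem isMeasurable_of_closed {α π : Ordinal.{0}} {x : Set Ordinal} (hπα : π < α)
    (hπ : Ordinal.omega0 < π) (hxπ : ∀ β, β < π ↔ β ∈ x ∧ β < α) {u : Set (Set Ordinal)}
    (hu : IsUltrafilterOn α u) (hc : IsComplete α (Iio α) u) (hnp : IsNonprincipal u)
    (htrace : ∀ Z ⊆ Iio π, ∃ i ∈ x, decode α i ∩ Iio π = Z)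
    (hinter : ∀ δ < π, ∀ c : Iio δ → Ordinal, (∀ j, c j ∈ x) →
      code α (Iio α ∩ ⋂ j, decode α (c j)) ∈ x)
    (hcompl : ∀ i ∈ x, code α (Iio α \ decode α i) ∈ x)
    (hmin : ∀ i ∈ x, ∀ b ∈ x, sInf (decode α i ∩ Ioi b) ∈ x) : IsMeasurable π := by
  have hM : ∀ Y ∈ decode α '' x, Y ⊆ Iio α := by
    rintro _ ⟨i, -, rfl⟩
    exact decode_subset α i
  have htrace' : ∀ Z ⊆ Iio π, ∃ Y ∈ decode α '' x, Y ∩ Iio π = Z := fun Z hZ =>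
    let ⟨i, hi, h⟩ := htrace Z hZ
    ⟨_, mem_image_of_mem _ hi, h⟩
  have hinter' : ∀ δ < π, ∀ g : Iio δ → Set Ordinal, (∀ j, g j ∈ decode α '' x) →
      Iio α ∩ ⋂ j, g j ∈ decode α '' x := by
    intro δ hδ g hg
    choose c hcx hcg using hg
    refine ⟨_, hinter δ hδ c hcx, ?_⟩
    rw [decode_code inter_subset_left]
    simp only [hcg]
  have hcompl' : ∀ Y ∈ decode α '' x, Iio α \ Y ∈ decode α '' x := by
    rintro _ ⟨i, hi, rfl⟩
    exact ⟨_, hcompl i hi, decode_code sdiff_subset⟩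
  have hunbdd : ∀ Y ∈ decode α '' x, Y ∈ u → ∀ b < π, ∃ β ∈ Y, b < β ∧ β < π := by
    rintro _ ⟨i, hi, rfl⟩ hiu b hb
    obtain ⟨hbx, hbα⟩ := (hxπ b).1 hb
    obtain ⟨β, hβi, hbβ, -⟩ := hu.inter_nonempty hiu (hu.gt_mem hc hnp hbα)
    obtain ⟨hmi, hbm⟩ := csInf_mem (s := decode α i ∩ Ioi b) ⟨β, hβi, hbβ⟩
    exact ⟨_, hmi, hbm, (hxπ _).2 ⟨hmin i hi b hbx, decode_subset α i hmi⟩⟩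
  have hW := traceFilter_ultra hπα hinter' ((Ordinal.natCast_lt_omega0 2).trans hπ) hu hc hM
    htrace' hcompl' hunbdd
  have hWc := traceFilter_complete hπα hinter' hc
  have hWnp := traceFilter_nonprincipal hunbdd
  exact ⟨hW.isCard hWc hWnp, hπ, _, hW, hWnp, hWc⟩

namespace IsSupercompactMeasure

variable {α lam : Ordinal.{0}} {N : Set (Set (Set Ordinal.{0}))}
  (hN : IsSupercompactMeasure α lam N)
include hN

theorem exists_trace_mem (hαlam : α ≤ lam) (Z : Set Ordinal → Set Ordinal) :
    ∃ Y ⊆ Iio α,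
      {x | x ∈ sPInitial α lam ∧ Z x ∩ Iio (gap α x) = Y ∩ Iio (gap α x)} ∈ N := by
  set Y := {γ | γ < α ∧ {x | x ∈ sP α lam ∧ γ ∈ Z x} ∈ N}
  have hX : ∀ γ, {x | x ∈ sP α lam ∧ (γ < α → (γ ∈ Z x ↔ γ ∈ Y))} ∈ N := by
    refine fun γ => hN.ultra.setOf_imp_mem fun hγ => ?_
    by_cases hγN : {x | x ∈ sP α lam ∧ γ ∈ Z x} ∈ N
    · exact hN.ultra.mem_of_superset hγN
        (fun _ hx => ⟨hx.1, iff_of_true hx.2 ⟨hγ, hγN⟩⟩) fun _ hx => hx.1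
    · exact hN.ultra.mem_of_superset (hN.ultra.compl_mem (fun _ hx => hx.1) hγN)
        (fun _ hx => ⟨hx.1, iff_of_false (fun h => hx.2 ⟨hx.1, h⟩) fun h => hγN h.2⟩)
        fun _ hx => hx.1
  refine ⟨Y, fun _ hγ => hγ.1, hN.ultra.mem_of_inter_subset (hN.sPInitial_mem hαlam)
    (hN.diagInter_mem _ hX) (fun x hx => ⟨hx.1, ?_⟩) fun _ hx => hx.1.1⟩
  ext β
  refine and_congr_left fun hβ => ?_
  obtain ⟨hβx, hβα⟩ := (lt_gap_iff hx.1).1 hβ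
  exact (hx.2.2 β hβx).2 hβα

theorem totality_mem (hlam : codeBound α ≤ lam) :
    {x | x ∈ sPInitial α lam ∧
      ∀ Z ⊆ Iio (gap α x), ∃ i ∈ x, decode α i ∩ Iio (gap α x) = Z} ∈ N := by
  by_contra h
  have hS := hN.ultra.compl_mem (fun _ hx => hx.1.1) h
  have hwit : ∀ x ∈ sP α lam \ {x | x ∈ sPInitial α lam ∧
      ∀ Z ⊆ Iio (gap α x), ∃ i ∈ x, decode α i ∩ Iio (gap α x) = Z}, x ∈ sPInitial α lam →
      ∃ Z ⊆ Iio (gap α x), ∀ i ∈ x, decode α i ∩ Iio (gap α x) ≠ Z := by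
    rintro x ⟨-, hxT⟩ hx
    by_contra h'
    push Not at h'
    exact hxT ⟨hx, h'⟩
  choose! Z hZgap hZ using hwit
  obtain ⟨Y, hYα, hY⟩ := hN.exists_trace_mem ((lt_codeBound α).le.trans hlam) Z
  obtain ⟨x, ⟨hxS, hx, hxY⟩, -, hcode⟩ := hN.ultra.inter_nonempty
    (hN.ultra.inter_mem _ hS _ hY) (hN.fine _ ((code_lt α Y).trans_le hlam))
  refine hZ x hxS hx _ hcode ?_
  rw [decode_code hYα, ← hxY, inter_eq_left.2 (hZgap x hxS hx)]

theorem measurables_mem (hlam : codeBound α ≤ lam) (hω : Ordinal.omega0 < α) :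
    {β | β < α ∧ IsMeasurable β} ∈ gapFilter α lam N := by
  have hαlam : α ≤ lam := (lt_codeBound α).le.trans hlam
  have hcode : ∀ Z, code α Z < lam := fun Z => (code_lt α Z).trans_le hlam
  have hC := hN.closedUnderFamily_gap_mem hαlam
    (fun δ c => code α (Iio α ∩ ⋂ j : Iio δ, decode α (c j))) fun _ _ => hcode _
  have hCmp := hN.closedUnder_mem (fun i => code α (Iio α \ decode α i)) fun _ => hcode _
  have hMin := hN.closedUnder₂_mem (fun i b => sInf (decode α i ∩ Ioi b)) fun i _ =>
    (sInf_lt_of_subset_Iio (inter_subset_left.trans (decode_subset α i))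
      (pos_of_gt hω)).trans_le hαlam
  have hall := hN.ultra.inter_mem _ (hN.ultra.inter_mem _ (hN.ultra.inter_mem _
    (hN.ultra.inter_mem _ (hN.totality_mem hlam) _ hC) _ hCmp) _ hMin) _
    (hN.lt_gap_mem hαlam hω)
  refine ⟨fun _ h => h.1, hN.ultra.mem_of_superset hall ?_ fun _ hx => hx.1⟩
  rintro x ⟨⟨⟨⟨hxT, hxC⟩, hxCmp⟩, hxMin⟩, -, hxω⟩
  have hgap := (gap_mem hxT.1.1).1
  exact ⟨hxT.1.1, hgap, isMeasurable_of_closed hgap hxω (fun _ => lt_gap_iff hxT.1)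
    hN.gapFilter_ultra hN.gapFilter_complete (hN.gapFilter_nonprincipal hαlam) hxT.2 hxC.2
    hxCmp.2 hxMin.2⟩

end IsSupercompactMeasure

theorem IsSupercompact.exists_normal_measurables_mem {α : Ordinal.{0}} (hα : IsSupercompact α)
    (hω : Ordinal.omega0 < α) :
    ∃ u, IsNormalUltrafilterOn α u ∧ {β | β < α ∧ IsMeasurable β} ∈ u := by
  obtain ⟨N, hNu, hNc, hNf, hNn⟩ :=
    hα.2 (codeBound α) (isCard_codeBound α) (lt_codeBound α).le
  have hN : IsSupercompactMeasure α (codeBound α) N := ⟨hNu, hNc, hNf, hNn⟩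
  exact ⟨_, hN.gapFilter_normal (lt_codeBound α).le, hN.measurables_mem le_rfl hω⟩

def nonsupercompactLimits (κ : Ordinal.{0}) : Set Ordinal.{0} :=
  {α | α < κ ∧ IsMeasurable α ∧ IsSupercompactLimit α ∧ ¬ IsSupercompact α}

theorem nonsupercompactLimits_inter_Iio {κ α : Ordinal.{0}} (h : α ≤ κ) :
    nonsupercompactLimits κ ∩ Iio α = nonsupercompactLimits α := by
  ext β
  exact ⟨fun hβ => ⟨hβ.2, hβ.1.2⟩, fun hβ => ⟨⟨hβ.1.trans_le h, hβ.2⟩, hβ.1⟩⟩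

theorem exists_normal_nonsupercompactLimits_mem (κ : Ordinal.{0}) (hκ : IsMeasurable κ)
    (hlim : IsSupercompactLimit κ) (U : Set (Set Ordinal)) (hU : IsNormalUltrafilterOn κ U)
    (hmeas : {α | α < κ ∧ IsMeasurable α} ∈ U) :
    ∃ V, IsNormalUltrafilterOn κ V ∧ nonsupercompactLimits κ ∈ V := by
  induction κ using WellFoundedLT.induction generalizing U with
  | _ κ IH =>
  by_cases hB : nonsupercompactLimits κ ∈ U
  · exact ⟨U, hU, hB⟩
  set S := {α | α < κ ∧ IsMeasurable α ∧ IsSupercompactLimit α ∧ IsSupercompact α}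
  have hS : S ∈ U := by
    refine hU.1.mem_of_inter_subset (hU.1.inter_mem _ hmeas _
      (hU.setOf_limit_mem hκ.isSuccLimit hlim)) (hU.1.compl_mem (fun _ h => h.1) hB) ?_
      fun _ h => h.1
    rintro α ⟨⟨⟨hακ, hα⟩, -, hαlim⟩, -, hnot⟩
    exact ⟨hακ, hα, hαlim, not_not.1 fun hsc => hnot ⟨hακ, hα, hαlim, hsc⟩⟩
  have hV : ∀ α ∈ S, ∃ V, IsNormalUltrafilterOn α V ∧ nonsupercompactLimits α ∈ V := by
    rintro α ⟨hακ, hα, hαlim, hsc⟩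
    obtain ⟨w, hw, hwmeas⟩ := hsc.exists_normal_measurables_mem hα.2.1
    exact IH α hακ hα hαlim w hw hwmeas
  choose! V hV hBV using hV
  refine ⟨_, hU.sumFilter hκ.isSuccLimit hS hV,
    mem_sumFilter_of hU.1 hS hS (fun _ h => h.1) fun α hα _ => ?_⟩
  rw [nonsupercompactLimits_inter_Iio hα.1.le]
  exact hBV α hα

/-- If `κ` is measurable, a limit of supercompact cardinals, and some normal ultrafilter
on `κ` contains the measurables, then some normal ultrafilter `V` on `κ` contains the set
of measurables which are limits of supercompacts but not supercompact; moreover every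
member of that set is compact. -/
theorem nonsupercompact_limits_of_supercompacts (κ : Ordinal) (hκ : IsMeasurable κ)
    (hub : ∀ β < κ, ∃ α, β < α ∧ α < κ ∧ IsSupercompact α)
    (U : Set (Set Ordinal)) (hU : IsNormalUltrafilterOn κ U)
    (hmeas : {α | α < κ ∧ IsMeasurable α} ∈ U) :
    ∃ V, IsNormalUltrafilterOn κ V ∧
      {α | α < κ ∧ IsMeasurable α ∧ (∀ β < α, ∃ γ, β < γ ∧ γ < α ∧ IsSupercompact γ) ∧
        ¬ IsSupercompact α} ∈ V ∧
      ∀ α ∈ {α | α < κ ∧ IsMeasurable α ∧ (∀ β < α, ∃ γ, β < γ ∧ γ < α ∧ IsSupercompact γ) ∧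
        ¬ IsSupercompact α}, IsCompact α := by
  obtain ⟨V, hV, hB⟩ := exists_normal_nonsupercompactLimits_mem κ hκ hub U hU hmeas
  exact ⟨V, hV, hB, fun α hα => hα.2.1.isCompact_of_isSupercompactLimit hα.2.2.1⟩

end Separability
end

section
/- Let κ be an uncountable cardinal, let γ ≥ κ be an ordinal, let U be a normal ultrafilter on κ, let A ∈ U be a set of uncountable cardinals, and for each α ∈ A let U_α be a fine ultrafilter on P_α(γ). Define V on P_κ(γ) by: x ∈ V if and only if {α ∈ A : x ∩ P_α(γ) ∈ U_α} ∈ U. Then V is a fine ultrafilter on P_κ(γ). -/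
open Set

namespace Separability

/-! Each ultrafilter law for the sum holds because it holds for `F α` at every `α ∈ A`, a member
of `U`; for a set `X` and its complement, `U` decides which of the two index sets it contains.
Fineness transfers because `P_α(γ) ⊆ P_κ(γ)` for `α < κ`. -/

namespace IsUltrafilterOnSet

variable {σ : Type*} {D : Set σ} {F : Set (Set σ)}

theorem superset_mem_of_subset (hF : IsUltrafilterOnSet D F) {X Y Z : Set σ} (hX : X ∈ F)
    (hXY : X ⊆ Y) (hYZ : Y ⊆ Z) (hZ : Z ∈ F) : Y ∈ F :=
  hF.superset_mem X hX Y (hYZ.trans (hF.sets_subset Z hZ)) hXY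

theorem diff_mem_of_notMem (hF : IsUltrafilterOnSet D F) {X : Set σ} (hXD : X ⊆ D)
    (hX : X ∉ F) : D \ X ∈ F :=
  (hF.mem_or_compl_mem X hXD).resolve_left hX

end IsUltrafilterOnSet

section UltrafilterSum

variable {σ ι : Type*} {D : Set σ} {I A : Set ι} {U : Set (Set ι)} {E : ι → Set σ}
  {F : ι → Set (Set σ)}

def ultrafilterSum (D : Set σ) (A : Set ι) (U : Set (Set ι)) (E : ι → Set σ)
    (F : ι → Set (Set σ)) : Set (Set σ) :=
  {x | x ⊆ D ∧ {α | α ∈ A ∧ x ∩ E α ∈ F α} ∈ U}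

theorem mem_ultrafilterSum_of_forall (hU : IsUltrafilterOnSet I U) (hA : A ∈ U) {x : Set σ}
    (hxD : x ⊆ D) (hx : ∀ α ∈ A, x ∩ E α ∈ F α) : x ∈ ultrafilterSum D A U E F :=
  ⟨hxD, hU.superset_mem_of_subset hA (fun α hα => ⟨hα, hx α hα⟩) (fun _ h => h.1) hA⟩

theorem isUltrafilterOnSet_ultrafilterSum (hU : IsUltrafilterOnSet I U) (hA : A ∈ U)
    (hE : ∀ α ∈ A, E α ⊆ D) (hF : ∀ α ∈ A, IsUltrafilterOnSet (E α) (F α)) :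
    IsUltrafilterOnSet D (ultrafilterSum D A U E F) where
  sets_subset _ hX := hX.1
  univ_mem := mem_ultrafilterSum_of_forall hU hA subset_rfl fun α hα => by
    rw [inter_eq_right.2 (hE α hα)]
    exact (hF α hα).univ_mem
  empty_not_mem h := by
    have hnone : {α | α ∈ A ∧ (∅ : Set σ) ∩ E α ∈ F α} = ∅ :=
      eq_empty_of_forall_notMem fun α ⟨hα, hmem⟩ =>
        (hF α hα).empty_not_mem (empty_inter (E α) ▸ hmem)
    exact hU.empty_not_mem (hnone ▸ h.2)
  superset_mem X hX Y hYD hXY :=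
    ⟨hYD, hU.superset_mem_of_subset hX.2
      (fun α ⟨hα, hmem⟩ => ⟨hα, (hF α hα).superset_mem _ hmem _ inter_subset_right
        (inter_subset_inter_left _ hXY)⟩)
      (fun _ h => h.1) hA⟩
  inter_mem X hX Y hY :=
    ⟨inter_subset_left.trans hX.1, hU.superset_mem_of_subset (hU.inter_mem _ hX.2 _ hY.2)
      (fun α ⟨⟨hα, hXα⟩, _, hYα⟩ =>
        ⟨hα, inter_inter_distrib_right X Y (E α) ▸ (hF α hα).inter_mem _ hXα _ hYα⟩)
      (fun _ h => h.1) hA⟩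
  mem_or_compl_mem X hXD := by
    by_cases hS : {α | α ∈ A ∧ X ∩ E α ∈ F α} ∈ U
    · exact Or.inl ⟨hXD, hS⟩
    have hrest : A ∩ (I \ {α | α ∈ A ∧ X ∩ E α ∈ F α}) ∈ U :=
      hU.inter_mem _ hA _ (hU.diff_mem_of_notMem (fun α h => hU.sets_subset A hA h.1) hS)
    refine Or.inr ⟨sdiff_subset, hU.superset_mem_of_subset hrest ?_ (fun _ h => h.1) hA⟩
    rintro α ⟨hα, -, hnot⟩
    have hdiff : E α \ (X ∩ E α) = (D \ X) ∩ E α := by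
      rw [sdiff_inter_self_eq_sdiff, ← inter_sdiff_right_comm, inter_eq_right.2 (hE α hα)]
    exact ⟨hα, hdiff ▸ (hF α hα).diff_mem_of_notMem inter_subset_right
      fun h => hnot ⟨hα, h⟩⟩

end UltrafilterSum

theorem sP_mono_left {α κ : Ordinal} (h : α ≤ κ) (γ : Ordinal) : sP α γ ⊆ sP κ γ :=
  fun _ hx => ⟨hx.1, hx.2.trans_le (Cardinal.lift_le.2 (Ordinal.card_le_card h))⟩

theorem isFine_ultrafilterSum {ι : Type*} {I A : Set ι} {U : Set (Set ι)}
    (hU : IsUltrafilterOnSet I U) (hA : A ∈ U) {κ γ : Ordinal} {a : ι → Ordinal}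
    (haκ : ∀ i ∈ A, a i ≤ κ) {F : ι → Set (Set (Set Ordinal))}
    (hF : ∀ i ∈ A, IsFine (a i) γ (F i)) :
    IsFine κ γ (ultrafilterSum (sP κ γ) A U (fun i => sP (a i) γ) F) := by
  intro β hβ
  refine mem_ultrafilterSum_of_forall hU hA (fun _ hx => hx.1) fun i hi => ?_
  have hrestrict :
      {x | x ∈ sP κ γ ∧ β ∈ x} ∩ sP (a i) γ = {x | x ∈ sP (a i) γ ∧ β ∈ x} := by
    ext x
    exact ⟨fun ⟨⟨_, hβx⟩, hx⟩ => ⟨hx, hβx⟩,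
      fun ⟨hx, hβx⟩ => ⟨⟨sP_mono_left (haκ i hi) γ hx, hβx⟩, hx⟩⟩
  exact hrestrict ▸ hF i hi β hβ

theorem sum_is_fine_ultrafilter_general (κ : Ordinal)
    (γ : Ordinal)
    (U : Set (Set Ordinal)) (hU : IsNormalUltrafilterOn κ U)
    (A : Set Ordinal) (hA : A ∈ U)
    (Uf : Ordinal → Set (Set (Set Ordinal)))
    (hUf : ∀ α ∈ A, IsUltrafilterOnSet (sP α γ) (Uf α) ∧ IsFine α γ (Uf α)) :
    IsUltrafilterOnSet (sP κ γ)
      {x | x ⊆ sP κ γ ∧ {α | α ∈ A ∧ x ∩ sP α γ ∈ Uf α} ∈ U} ∧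
    IsFine κ γ {x | x ⊆ sP κ γ ∧ {α | α ∈ A ∧ x ∩ sP α γ ∈ Uf α} ∈ U} := by
  have hUκ : IsUltrafilterOn κ U := hU.1
  have hAκ : ∀ α ∈ A, α ≤ κ := fun α hα => (hUκ.sets_subset A hA hα).le
  exact ⟨isUltrafilterOnSet_ultrafilterSum hUκ hA (fun α hα => sP_mono_left (hAκ α hα) γ)
      fun α hα => (hUf α hα).1,
    isFine_ultrafilterSum hUκ hA hAκ fun α hα => (hUf α hα).2⟩

/-- The sum of fine ultrafilters `⟨U_α : α ∈ A⟩` on `P_α(γ)` over a normal ultrafilter `U`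
on `κ` (with `A ∈ U` a set of uncountable cardinals) is a fine ultrafilter on `P_κ(γ)`. -/
theorem sum_is_fine_ultrafilter (κ : Ordinal) (hcard : IsCard κ)
    (hunc : Ordinal.omega0 < κ)
    (γ : Ordinal) (hγ : κ ≤ γ)
    (U : Set (Set Ordinal)) (hU : IsNormalUltrafilterOn κ U)
    (A : Set Ordinal) (hA : A ∈ U)
    (hAcard : ∀ α ∈ A, IsCard α ∧ Ordinal.omega0 < α)
    (Uf : Ordinal → Set (Set (Set Ordinal)))
    (hUf : ∀ α ∈ A, IsUltrafilterOnSet (sP α γ) (Uf α) ∧ IsFine α γ (Uf α)) :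
    IsUltrafilterOnSet (sP κ γ)
      {x | x ⊆ sP κ γ ∧ {α | α ∈ A ∧ x ∩ sP α γ ∈ Uf α} ∈ U} ∧
    IsFine κ γ {x | x ⊆ sP κ γ ∧ {α | α ∈ A ∧ x ∩ sP α γ ∈ Uf α} ∈ U} :=
  sum_is_fine_ultrafilter_general κ γ U hU A hA Uf hUf

end Separability
end
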